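/- arXiv:1811.01654 — 4 statements merged into one kernel-verified Lean document; each statement's English description precedes it below -/
import Mathlib

section
/- For any fixed G ∈ A, the function H ↦ η*(G,H) is multiplicative: for all nonzero monic H₁, H₂ ∈ A with monic gcd (H₁,H₂) = 1, one has η*(G, H₁H₂) = η*(G,H₁) · η*(G,H₂). -/
open Polynomial UniqueFactorizationMonoid

variable (p : ℕ) [Fact p.Prime] (F : Type) [Field F] [Fintype F] [DecidableEq F]
  [Algebra (ZMod p) F]

/-- The absolute value `|G| = q ^ deg G` of a polynomial over `𝔽_q`. -/
def anorm (G : Polynomial F) : ℕ := Fintype.card F ^ G.natDegree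

/-- `t_H(A')`: the coefficient of `T^(m-1)` in the remainder of `A'` upon division by `H`,
where `m = deg H`. -/
noncomputable def tmap (H A' : Polynomial F) : F := (A' % H).coeff (H.natDegree - 1)

/-- The additive character `E(G,H)(D) = exp(2πi · tr(t_H(G·D)) / p)`. -/
noncomputable def echar (G H D : Polynomial F) : ℂ :=
  Complex.exp (2 * Real.pi * Complex.I *
    ((Algebra.trace (ZMod p) F (tmap F H (G * D))).val : ℂ) / (p : ℂ))

open scoped Classical in
/-- `ω(G)`: the number of distinct monic irreducible divisors of `G`. -/
noncomputable def omega (G : Polynomial F) : ℕ := (normalizedFactors G).toFinset.card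

open scoped Classical in
/-- The Möbius function on `𝔽_q[T]`. -/
noncomputable def mu (G : Polynomial F) : ℤ :=
  if Squarefree G then (-1) ^ omega F G else 0

/-- The polynomial Ramanujan sum `η(G,H)`: the sum of `E(G,H)(D)` over a complete residue
system `D` modulo `H` with `(D,H) = 1`. -/
noncomputable def eta (G H : Polynomial F) : ℂ :=
  ∑' D : {D : Polynomial F // D.degree < H.degree ∧ IsCoprime D H}, echar p F G H D.1

open scoped Classical in
/-- The unitary gcd `(G,H)_*`: the monic polynomial of highest degree dividing `G` and
unitarily dividing `H`. -/
noncomputable def ugcd (G H : Polynomial F) : Polynomial F :=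
  ∏ P ∈ (normalizedFactors H).toFinset,
    if P ^ (normalizedFactors H).count P ∣ G then P ^ (normalizedFactors H).count P else 1

/-- `μ*(G) = (-1)^(ω(G))`. -/
noncomputable def muStar (G : Polynomial F) : ℤ := (-1) ^ omega F G

/-- The unitary polynomial Ramanujan sum `η*(G,H)`: the sum of `E(G,H)(D)` over a complete
residue system `D` modulo `H` with `(D,H)_* = 1`. -/
noncomputable def etaStar (G H : Polynomial F) : ℂ :=
  ∑' D : {D : Polynomial F // D.degree < H.degree ∧ ugcd F D H = 1}, echar p F G H D.1

/-!
By the Chinese remainder theorem, `(D₁, D₂) ↦ D₁ H₂ + D₂ H₁` maps residues modulo `H₁` and `H₂`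
bijectively onto residues modulo `H₁ H₂`. The prime-power unitary divisors of `H₁ H₂` are those of
`H₁` together with those of `H₂`, so `(D₁ H₂ + D₂ H₁, H₁ H₂)_* = 1` exactly when
`(D₁, H₁)_* = 1` and `(D₂, H₂)_* = 1`. Finally `t_{H₁H₂}(A H₁) = t_{H₂}(A)` for monic `H₁`, so
the character `E(G, H₁H₂)` evaluated at `D₁ H₂ + D₂ H₁` factors as `E(G, H₁)(D₁) · E(G, H₂)(D₂)`.
-/

theorem pow_count_normalizedFactors_dvd {α : Type*} [CommMonoidWithZero α]
    [NormalizationMonoid α] [UniqueFactorizationMonoid α] [DecidableEq α] {a : α} (ha : a ≠ 0)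
    (x : α) : x ^ (normalizedFactors a).count x ∣ a := by
  rw [Multiset.pow_count]
  exact (Multiset.prod_dvd_prod_of_le (Multiset.filter_le _ _)).trans
    (prod_normalizedFactors ha).dvd

theorem IsCoprime.dvd_mul_add_mul_iff {R : Type*} [CommRing R] {Q H₁ H₂ D₁ D₂ : R}
    (hcop : IsCoprime Q H₂) (hQ : Q ∣ H₁) : Q ∣ D₁ * H₂ + D₂ * H₁ ↔ Q ∣ D₁ :=
  (dvd_add_left (hQ.mul_left D₂)).trans ⟨hcop.dvd_of_dvd_mul_right, (·.mul_right H₂)⟩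

section UniqueFactorization

variable {R : Type*} [CommRing R] [NormalizationMonoid R] [UniqueFactorizationMonoid R]
  [DecidableEq R] {H₁ H₂ D₁ D₂ P : R}

theorem count_normalizedFactors_mul_of_isCoprime (hcop : IsCoprime H₁ H₂) (h₁ : H₁ ≠ 0)
    (h₂ : H₂ ≠ 0) (hP : P ∈ normalizedFactors H₁) :
    (normalizedFactors (H₁ * H₂)).count P = (normalizedFactors H₁).count P := by
  have hP₂ : P ∉ normalizedFactors H₂ := fun hP₂ ↦
    (irreducible_of_normalized_factor P hP).not_isUnit
      (hcop.isUnit_of_dvd' (dvd_of_mem_normalizedFactors hP) (dvd_of_mem_normalizedFactors hP₂))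
  rw [normalizedFactors_mul h₁ h₂, Multiset.count_add, Multiset.count_eq_zero.2 hP₂, add_zero]

theorem pow_count_dvd_mul_add_mul_iff (hcop : IsCoprime H₁ H₂) (h₁ : H₁ ≠ 0) (h₂ : H₂ ≠ 0)
    (hP : P ∈ normalizedFactors H₁) :
    P ^ (normalizedFactors (H₁ * H₂)).count P ∣ D₁ * H₂ + D₂ * H₁ ↔
      P ^ (normalizedFactors H₁).count P ∣ D₁ := by
  rw [count_normalizedFactors_mul_of_isCoprime hcop h₁ h₂ hP]
  have hdvd := pow_count_normalizedFactors_dvd h₁ P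
  exact (hcop.of_isCoprime_of_dvd_left hdvd).dvd_mul_add_mul_iff hdvd

end UniqueFactorization

namespace Polynomial

variable {K : Type*} [Field K]

instance finite_degree_lt_subtype [Finite K] (H : K[X]) (Q : K[X] → Prop) :
    Finite {D : K[X] // D.degree < H.degree ∧ Q D} :=
  Finite.of_injective
    (fun D ↦ degreeLTEquiv K H.natDegree
      ⟨D.1, mem_degreeLT.2 (D.2.1.trans_le degree_le_natDegree)⟩)
    fun _ _ h ↦ Subtype.ext (by simpa using (degreeLTEquiv K _).injective h)

theorem mul_mod_mul_left (H₁ H₂ A : K[X]) :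
    H₁ * A % (H₁ * H₂) = H₁ * (A % H₂) := by
  rcases eq_or_ne H₁ 0 with rfl | h₁
  · simp
  rcases eq_or_ne H₂ 0 with rfl | h₂
  · simp
  have hA : H₁ * A = H₁ * (A % H₂) + H₁ * H₂ * (A / H₂) := by
    linear_combination H₁ * (EuclideanDomain.mod_add_div A H₂).symm
  rw [hA, add_mod, EuclideanDomain.mod_eq_zero.2 (dvd_mul_right _ _), add_zero,
    mod_eq_self_iff (mul_ne_zero h₁ h₂), degree_mul, degree_mul]
  exact WithBot.add_lt_add_left (degree_ne_bot.2 h₁) (degree_mod_lt A h₂)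

section ChineseRemainder

variable {H₁ H₂ D₁ D₂ E₁ E₂ : K[X]}

theorem degree_mul_add_mul_lt (h₁ : H₁ ≠ 0) (h₂ : H₂ ≠ 0) (hD₁ : D₁.degree < H₁.degree)
    (hD₂ : D₂.degree < H₂.degree) : (D₁ * H₂ + D₂ * H₁).degree < (H₁ * H₂).degree := by
  refine (degree_add_le _ _).trans_lt (max_lt ?_ ?_)
  · rw [degree_mul, degree_mul]
    exact WithBot.add_lt_add_right (degree_ne_bot.2 h₂) hD₁
  · rw [degree_mul, degree_mul, add_comm H₁.degree]
    exact WithBot.add_lt_add_right (degree_ne_bot.2 h₁) hD₂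

theorem eq_of_mul_add_mul_eq (hcop : IsCoprime H₁ H₂) (h₁ : H₁ ≠ 0)
    (hD₁ : D₁.degree < H₁.degree) (hE₁ : E₁.degree < H₁.degree)
    (h : D₁ * H₂ + D₂ * H₁ = E₁ * H₂ + E₂ * H₁) : D₁ = E₁ ∧ D₂ = E₂ := by
  have hdvd : H₁ ∣ D₁ - E₁ :=
    hcop.dvd_of_dvd_mul_right ⟨E₂ - D₂, by linear_combination h⟩
  have hD : D₁ = E₁ := sub_eq_zero.1 <|
    eq_zero_of_dvd_of_degree_lt hdvd ((degree_sub_le _ _).trans_lt (max_lt hD₁ hE₁))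
  subst hD
  exact ⟨rfl, mul_right_cancel₀ h₁ (add_left_cancel h)⟩

theorem exists_mul_add_mul_eq (hcop : IsCoprime H₁ H₂) (h₁ : H₁ ≠ 0) (h₂ : H₂ ≠ 0) {D : K[X]}
    (hD : D.degree < (H₁ * H₂).degree) :
    ∃ D₁ D₂ : K[X], D₁.degree < H₁.degree ∧ D₂.degree < H₂.degree ∧ D₁ * H₂ + D₂ * H₁ = D := by
  obtain ⟨a, b, hab⟩ := hcop
  refine ⟨D * b % H₁, D * a % H₂, degree_mod_lt _ h₁, degree_mod_lt _ h₂, ?_⟩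
  have hdiff : H₁ * H₂ ∣ D * b % H₁ * H₂ + D * a % H₂ * H₁ - D :=
    ⟨-(D * b / H₁ + D * a / H₂), by
      linear_combination H₂ * EuclideanDomain.mod_add_div (D * b) H₁ +
        H₁ * EuclideanDomain.mod_add_div (D * a) H₂ + D * hab⟩
  exact sub_eq_zero.1 <| eq_zero_of_dvd_of_degree_lt hdiff <| (degree_sub_le _ _).trans_lt <|
    max_lt (degree_mul_add_mul_lt h₁ h₂ (degree_mod_lt _ h₁) (degree_mod_lt _ h₂)) hD

noncomputable def crtEquiv (hcop : IsCoprime H₁ H₂) (h₁ : H₁ ≠ 0) (h₂ : H₂ ≠ 0)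
    {Q₁ Q₂ Q : K[X] → Prop} (hQ : ∀ D₁ D₂, Q (D₁ * H₂ + D₂ * H₁) ↔ Q₁ D₁ ∧ Q₂ D₂) :
    {D // D.degree < H₁.degree ∧ Q₁ D} × {D // D.degree < H₂.degree ∧ Q₂ D} ≃
      {D // D.degree < (H₁ * H₂).degree ∧ Q D} :=
  Equiv.ofBijective
    (fun x ↦ ⟨x.1.1 * H₂ + x.2.1 * H₁, degree_mul_add_mul_lt h₁ h₂ x.1.2.1 x.2.2.1,
      (hQ _ _).2 ⟨x.1.2.2, x.2.2.2⟩⟩)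
    ⟨fun x y h ↦ by
      obtain ⟨h₁', h₂'⟩ := eq_of_mul_add_mul_eq hcop h₁ x.1.2.1 y.1.2.1 (congrArg Subtype.val h)
      exact Prod.ext (Subtype.ext h₁') (Subtype.ext h₂'),
    fun ⟨D, hD, hQD⟩ ↦ by
      obtain ⟨D₁, D₂, hD₁, hD₂, rfl⟩ := exists_mul_add_mul_eq hcop h₁ h₂ hD
      obtain ⟨hQ₁, hQ₂⟩ := (hQ D₁ D₂).1 hQD
      exact ⟨(⟨D₁, hD₁, hQ₁⟩, ⟨D₂, hD₂, hQ₂⟩), rfl⟩⟩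

end ChineseRemainder

end Polynomial

section UnitaryGcd

variable {K : Type} [Field K] [DecidableEq K]

theorem ugcd_eq_one_iff {D H : K[X]} :
    ugcd K D H = 1 ↔
      ∀ P ∈ (normalizedFactors H).toFinset, ¬ P ^ (normalizedFactors H).count P ∣ D := by
  refine ⟨fun h P hP hdvd ↦ ?_, fun h ↦ Finset.prod_eq_one fun P hP ↦ if_neg (h P hP)⟩
  have hP' := Multiset.mem_toFinset.1 hP
  have hunit : IsUnit (P ^ (normalizedFactors H).count P) := by
    refine isUnit_of_dvd_one ?_
    rw [← h, ugcd]
    exact (if_pos hdvd).symm.dvd.trans (Finset.dvd_prod_of_mem _ hP)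
  exact (irreducible_of_normalized_factor P hP').not_isUnit
    ((isUnit_pow_iff (Multiset.count_pos.2 hP').ne').1 hunit)

theorem ugcd_mul_add_mul_eq_one_iff {H₁ H₂ : K[X]} (hcop : IsCoprime H₁ H₂) (h₁ : H₁ ≠ 0)
    (h₂ : H₂ ≠ 0) (D₁ D₂ : K[X]) :
    ugcd K (D₁ * H₂ + D₂ * H₁) (H₁ * H₂) = 1 ↔ ugcd K D₁ H₁ = 1 ∧ ugcd K D₂ H₂ = 1 := by
  have hfactors : (normalizedFactors (H₁ * H₂)).toFinset =
      (normalizedFactors H₁).toFinset ∪ (normalizedFactors H₂).toFinset := by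
    rw [normalizedFactors_mul h₁ h₂, Multiset.toFinset_add]
  rw [ugcd_eq_one_iff, ugcd_eq_one_iff, ugcd_eq_one_iff, hfactors, Finset.forall_mem_union]
  refine and_congr (forall₂_congr fun P hP ↦ ?_) (forall₂_congr fun P hP ↦ ?_)
  · rw [pow_count_dvd_mul_add_mul_iff hcop h₁ h₂ (Multiset.mem_toFinset.1 hP)]
  · rw [mul_comm H₁, add_comm,
      pow_count_dvd_mul_add_mul_iff hcop.symm h₂ h₁ (Multiset.mem_toFinset.1 hP)]

end UnitaryGcd

section Character

variable {K : Type} [Field K]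

theorem tmap_add (H A B : K[X]) : tmap K H (A + B) = tmap K H A + tmap K H B := by
  rw [tmap, tmap, tmap, add_mod, coeff_add]

theorem tmap_mul_mul_left {H₁ H₂ : K[X]} (h₂ : H₂ ≠ 0) (A : K[X]) :
    tmap K (H₁ * H₂) (H₁ * A) = H₁.leadingCoeff * tmap K H₂ A := by
  rcases eq_or_ne H₁ 0 with rfl | h₁
  · simp [tmap]
  rw [tmap, tmap, mul_mod_mul_left]
  rcases eq_or_ne (A % H₂) 0 with hR | hR
  · simp [hR]
  have hdeg : (A % H₂).natDegree < H₂.natDegree := natDegree_lt_natDegree hR (degree_mod_lt A h₂)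
  rw [natDegree_mul h₁ h₂, show H₁.natDegree + H₂.natDegree - 1 = H₁.natDegree + (H₂.natDegree - 1)
    by omega, coeff_mul_add_eq_of_natDegree_le le_rfl (Nat.le_sub_one_of_lt hdeg), coeff_natDegree]

variable [Algebra (ZMod p) K]

theorem echar_eq_stdAddChar (G H D : K[X]) :
    echar p K G H D = ZMod.stdAddChar (Algebra.trace (ZMod p) K (tmap K H (G * D))) := by
  rw [echar, ZMod.stdAddChar_apply, ZMod.toCircle_apply]

theorem echar_mul_add_mul (G : K[X]) {H₁ H₂ : K[X]} (h₁ : H₁.Monic) (h₂ : H₂.Monic)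
    (D₁ D₂ : K[X]) :
    echar p K G (H₁ * H₂) (D₁ * H₂ + D₂ * H₁) = echar p K G H₁ D₁ * echar p K G H₂ D₂ := by
  have ht₁ : tmap K (H₁ * H₂) (H₂ * (G * D₁)) = tmap K H₁ (G * D₁) := by
    rw [mul_comm H₁, tmap_mul_mul_left h₁.ne_zero, h₂.leadingCoeff, one_mul]
  have ht₂ : tmap K (H₁ * H₂) (H₁ * (G * D₂)) = tmap K H₂ (G * D₂) := by
    rw [tmap_mul_mul_left h₂.ne_zero, h₁.leadingCoeff, one_mul]
  rw [echar_eq_stdAddChar, echar_eq_stdAddChar, echar_eq_stdAddChar,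
    show G * (D₁ * H₂ + D₂ * H₁) = H₂ * (G * D₁) + H₁ * (G * D₂) by ring, tmap_add, ht₁, ht₂,
    map_add, AddChar.map_add_eq_mul]

end Character

theorem etaStar_multiplicative (G H₁ H₂ : Polynomial F)
    (h₁ : H₁.Monic) (h₂ : H₂.Monic)
    (hcop : IsCoprime H₁ H₂) :
    etaStar p F G (H₁ * H₂) = etaStar p F G H₁ * etaStar p F G H₂ := by
  let e := crtEquiv (Q₁ := (ugcd F · H₁ = 1)) (Q₂ := (ugcd F · H₂ = 1))
    (Q := (ugcd F · (H₁ * H₂) = 1)) hcop h₁.ne_zero h₂.ne_zero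
    (ugcd_mul_add_mul_eq_one_iff hcop h₁.ne_zero h₂.ne_zero)
  rw [etaStar, etaStar, etaStar, ← e.tsum_eq,
    Summable.tsum_mul_tsum .of_finite .of_finite .of_finite]
  exact tsum_congr fun x ↦ echar_mul_add_mul p G h₁ h₂ x.1.1 x.2.1
end

section
/- For all G ∈ A and nonzero monic H ∈ A, Σ over monic D with D ∥ H of η*(G,D) equals |H| if H ∣ G, and equals 0 otherwise. -/
open Polynomial UniqueFactorizationMonoid

variable (p : ℕ) [Fact p.Prime] (F : Type) [Field F] [Fintype F] [DecidableEq F]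
  [Algebra (ZMod p) F]

/-!
Write `C = H / D` for a unitary divisor `D ∥ H`. The map `(D, B) ↦ B * C` sends the pairs with
`deg B < deg D` and `(B, D)_* = 1` bijectively onto the residues `A` modulo `H`; the inverse reads
`C` off as `(A, H)_*`, because `(C * B, C * D)_* = C * (B, D)_*` for coprime monic `C` and `D`.
Since `t_{D C}(A C) = t_D(A)`, the bijection carries `E(G,D)(B)` to `E(G,H)(B C)`, so the sum
becomes `∑_{A mod H} E(G,H)(A)`. This is the sum of an additive character of the residues modulo
`H`, which is trivial exactly when `H ∣ G`: if `H ∤ G` then `t_H(G X^k)` is the leading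
coefficient of `G mod H` for a suitable `k`, so `A ↦ t_H(G A)` is a nonzero functional, and its
composite with the (surjective) trace to `𝔽_p` takes the value `1`.
-/

section NormalizedFactors

theorem prod_pow_count_normalizedFactors {α : Type*} [CommMonoidWithZero α]
    [StrongNormalizationMonoid α] [UniqueFactorizationMonoid α] [DecidableEq α] {a : α}
    (ha : a ≠ 0) :
    ∏ P ∈ (normalizedFactors a).toFinset, P ^ (normalizedFactors a).count P = normalize a := by
  rw [← Finset.prod_multiset_count, prod_normalizedFactors_eq ha]

theorem isCoprime_of_mem_normalizedFactors {R : Type*} [CommRing R] [IsDomain R]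
    [IsPrincipalIdealRing R] [NormalizationMonoid R] {a P Q : R} (hP : P ∈ normalizedFactors a)
    (hQ : Q ∈ normalizedFactors a) (hPQ : P ≠ Q) : IsCoprime P Q := by
  have hPirr := irreducible_of_normalized_factor P hP
  refine hPirr.coprime_iff_not_dvd.2 fun h => hPQ ?_
  exact mem_normalizedFactors_eq_of_associated hP hQ
    (hPirr.associated_of_dvd (irreducible_of_normalized_factor Q hQ) h)

end NormalizedFactors

section PolynomialDivision

lemma degree_mul_lt_degree_mul_iff {R : Type*} [Semiring R] [NoZeroDivisors R] {B D C : R[X]}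
    (hC : C ≠ 0) : (B * C).degree < (D * C).degree ↔ B.degree < D.degree := by
  rw [degree_mul, degree_mul]
  exact WithBot.add_lt_add_iff_right (degree_ne_bot.2 hC)

lemma mul_modByMonic_mul {R : Type*} [CommRing R] [Nontrivial R] {D C : R[X]} (hD : D.Monic)
    (hC : C.Monic) (A : R[X]) : (A * C) %ₘ (D * C) = (A %ₘ D) * C := by
  refine (div_modByMonic_unique (A /ₘ D) _ (hD.mul hC) ⟨?_, ?_⟩).2
  · linear_combination (norm := ring_nf) C * modByMonic_add_div A D
  · rw [hC.degree_mul, hC.degree_mul]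
    exact WithBot.add_lt_add_right (degree_ne_bot.2 hC.ne_zero) (degree_modByMonic_lt A hD)

end PolynomialDivision

section TraceCharacter

variable {K : Type} [Field K] [Algebra (ZMod p) K] {V : Type*} [AddCommGroup V] [Module K V]

noncomputable def traceChar (L : V →ₗ[K] K) : AddChar V ℂ :=
  ZMod.stdAddChar.compAddMonoidHom
    ((Algebra.trace (ZMod p) K).toAddMonoidHom.comp L.toAddMonoidHom)

lemma traceChar_apply (L : V →ₗ[K] K) (v : V) :
    traceChar p L v = Complex.exp (2 * Real.pi * Complex.I *
      ((Algebra.trace (ZMod p) K (L v)).val : ℂ) / (p : ℂ)) :=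
  ZMod.toCircle_apply _

lemma traceChar_eq_zero_iff [Finite K] (L : V →ₗ[K] K) : traceChar p L = 0 ↔ L = 0 := by
  refine ⟨fun h => ?_, fun h => by ext v; simp [traceChar, h]⟩
  by_contra hL
  obtain ⟨v, hv⟩ : ∃ v, L v ≠ 0 := by simpa [LinearMap.ext_iff] using hL
  have : FiniteDimensional (ZMod p) K := Module.Finite.of_finite
  obtain ⟨y, hy⟩ := Algebra.trace_surjective (ZMod p) K 1
  have hw : L ((y / L v) • v) = y := by rw [map_smul, smul_eq_mul, div_mul_cancel₀ _ hv]
  have := AddChar.eq_zero_iff.1 h ((y / L v) • v)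
  rw [traceChar, AddChar.compAddMonoidHom_apply, AddMonoidHom.comp_apply] at this
  simp only [LinearMap.toAddMonoidHom_coe, hw, hy] at this
  exact one_ne_zero (ZMod.injective_stdAddChar (this.trans (AddChar.map_zero_eq_one _).symm))

end TraceCharacter

section Orthogonality

variable {K : Type} [Field K] {G H : K[X]}

noncomputable def tmapMul (G H : K[X]) : K[X] →ₗ[K] K :=
  lcoeff K (H.natDegree - 1) ∘ₗ modByMonicHom H ∘ₗ LinearMap.mulLeft K G

lemma tmapMul_apply (hH : H.Monic) (A : K[X]) : tmapMul G H A = tmap K H (G * A) := by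
  simp [tmapMul, tmap, modByMonic_eq_mod _ hH]

lemma exists_tmapMul_ne_zero (hH : H.Monic) (hG : ¬H ∣ G) :
    ∃ A ∈ degreeLT K H.natDegree, tmapMul G H A ≠ 0 := by
  set r := G %ₘ H
  have hr : r ≠ 0 := fun h0 => hG ((modByMonic_eq_zero_iff_dvd hH).1 h0)
  have hrH : r.natDegree < H.natDegree := natDegree_lt_natDegree hr (degree_modByMonic_lt G hH)
  set k := H.natDegree - 1 - r.natDegree
  have hXk : (X ^ k : K[X]).degree < H.degree := by
    rw [degree_X_pow, degree_eq_natDegree hH.ne_zero]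
    exact_mod_cast (by omega : k < H.natDegree)
  have hrXk : (r * X ^ k).degree < H.degree := by
    rw [degree_mul, degree_X_pow, degree_eq_natDegree hr, degree_eq_natDegree hH.ne_zero]
    exact_mod_cast (by omega : r.natDegree + k < H.natDegree)
  refine ⟨X ^ k, by rwa [mem_degreeLT, ← degree_eq_natDegree hH.ne_zero], ?_⟩
  rw [tmapMul_apply hH, tmap, ← modByMonic_eq_mod _ hH, mul_modByMonic,
    (modByMonic_eq_self_iff hH).2 hXk, (modByMonic_eq_self_iff hH).2 hrXk,
    show H.natDegree - 1 = r.natDegree + k by omega, coeff_mul_X_pow]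
  exact leadingCoeff_ne_zero.2 hr

lemma tmapMul_comp_degreeLT_eq_zero_iff (hH : H.Monic) :
    tmapMul G H ∘ₗ (degreeLT K H.natDegree).subtype = 0 ↔ H ∣ G := by
  refine ⟨fun h => ?_, fun h => ?_⟩
  · by_contra hG
    obtain ⟨A, hA, hA0⟩ := exists_tmapMul_ne_zero hH hG
    exact hA0 (LinearMap.congr_fun h ⟨A, hA⟩)
  · ext A
    simp [tmapMul_apply hH, tmap, ← modByMonic_eq_mod _ hH,
      (modByMonic_eq_zero_iff_dvd hH).2 (h.mul_right A)]

instance finite_degree_lt [Finite K] (H : K[X]) : Finite {A : K[X] // A.degree < H.degree} :=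
  have : Finite (degreeLT K H.natDegree) := Finite.of_equiv _ (degreeLTEquiv K _).toEquiv.symm
  Finite.of_injective
    (fun A => (⟨A.1, mem_degreeLT.2 (A.2.trans_le degree_le_natDegree)⟩ : degreeLT K H.natDegree))
    fun _ _ h => Subtype.ext (Subtype.mk.inj h)

variable [Algebra (ZMod p) K]

lemma echar_eq_traceChar (hH : H.Monic) (A : K[X]) :
    echar p K G H A = traceChar p (tmapMul G H) A := by
  rw [traceChar_apply, tmapMul_apply hH, echar]

open scoped Classical in
lemma tsum_echar [Fintype K] (hH : H.Monic) :
    ∑' A : {A : K[X] // A.degree < H.degree}, echar p K G H A.1 =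
      if H ∣ G then (anorm K H : ℂ) else 0 := by
  let V := degreeLT K H.natDegree
  let : Fintype V := Fintype.ofEquiv _ (degreeLTEquiv K H.natDegree).toEquiv.symm
  have hcard : Fintype.card V = anorm K H := by
    rw [Fintype.card_congr (degreeLTEquiv K _).toEquiv, Fintype.card_fun, Fintype.card_fin, anorm]
  let e : V ≃ {A : K[X] // A.degree < H.degree} :=
    Equiv.subtypeEquivRight fun A => by rw [mem_degreeLT, degree_eq_natDegree hH.ne_zero]
  rw [← e.tsum_eq, tsum_fintype]
  calc ∑ v : V, echar p K G H (e v).1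
      = ∑ v : V, traceChar p (tmapMul G H ∘ₗ V.subtype) v :=
        Finset.sum_congr rfl fun v _ => echar_eq_traceChar p hH v
    _ = _ := by
      simp only [AddChar.sum_eq_ite, traceChar_eq_zero_iff, hcard]
      exact if_congr (tmapMul_comp_degreeLT_eq_zero_iff hH) rfl rfl

end Orthogonality

section UnitaryGcd

variable {K : Type} [Field K] [DecidableEq K]

lemma Polynomial.Monic.prod_pow_count_normalizedFactors {H : K[X]} (hH : H.Monic) :
    ∏ P ∈ (normalizedFactors H).toFinset, P ^ (normalizedFactors H).count P = H := by
  rw [_root_.prod_pow_count_normalizedFactors hH.ne_zero, hH.normalize_eq_self]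

lemma monic_of_mem_normalizedFactors {P H : K[X]} (hP : P ∈ normalizedFactors H) : P.Monic := by
  rw [← normalize_normalized_factor P hP]
  exact monic_normalize (prime_of_normalized_factor P hP).ne_zero

lemma ugcd_monic (A H : K[X]) : (ugcd K A H).Monic :=
  monic_prod_of_monic _ _ fun P hP => by
    split_ifs
    exacts [(monic_of_mem_normalizedFactors (Multiset.mem_toFinset.1 hP)).pow _, monic_one]

lemma ugcd_dvd_left (A H : K[X]) : ugcd K A H ∣ A := by
  classical
  rw [ugcd, ← Finset.prod_filter]
  refine Finset.prod_dvd_of_coprime (fun P hP Q hQ hPQ => ?_)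
    fun P hP => (Finset.mem_filter.1 hP).2
  simp only [Finset.coe_filter, Multiset.mem_toFinset, Set.mem_ofPred_eq] at hP hQ
  exact (isCoprime_of_mem_normalizedFactors hP.1 hQ.1 hPQ).pow

lemma exists_ugcd_mul_eq_and_isCoprime {H : K[X]} (hH : H.Monic) (A : K[X]) :
    ∃ D, ugcd K A H * D = H ∧ IsCoprime (ugcd K A H) D := by
  classical
  refine ⟨∏ P ∈ (normalizedFactors H).toFinset, if P ^ (normalizedFactors H).count P ∣ A then 1
    else P ^ (normalizedFactors H).count P, ?_, ?_⟩
  · rw [ugcd, ← Finset.prod_mul_distrib]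
    conv_rhs => rw [← hH.prod_pow_count_normalizedFactors]
    exact Finset.prod_congr rfl fun P _ => by split_ifs <;> simp
  · refine IsCoprime.prod_left fun P hP => IsCoprime.prod_right fun Q hQ => ?_
    split_ifs with hPA hQA hQA
    · exact isCoprime_one_right
    · refine (isCoprime_of_mem_normalizedFactors (Multiset.mem_toFinset.1 hP)
        (Multiset.mem_toFinset.1 hQ) ?_).pow
      rintro rfl
      exact hQA hPA
    all_goals exact isCoprime_one_left

lemma ugcd_mul_of_isCoprime {D C : K[X]} (hD : D ≠ 0) (hC : C ≠ 0) (h : IsCoprime D C)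
    (A : K[X]) : ugcd K A (D * C) = ugcd K A D * ugcd K A C := by
  have not_mem {P X Y : K[X]} (hXY : IsCoprime X Y) (hP : P ∈ normalizedFactors X) :
      P ∉ normalizedFactors Y := fun hP' =>
    (prime_of_normalized_factor P hP).not_isUnit
      (hXY.isUnit_of_dvd' (dvd_of_mem_normalizedFactors hP) (dvd_of_mem_normalizedFactors hP'))
  rw [ugcd, normalizedFactors_mul hD hC, Multiset.toFinset_add,
    Finset.prod_union (Finset.disjoint_left.2 fun P hP hP' =>
      not_mem h (Multiset.mem_toFinset.1 hP) (Multiset.mem_toFinset.1 hP'))]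
  congr 1 <;> refine Finset.prod_congr rfl fun P hP => ?_ <;>
    rw [Multiset.mem_toFinset] at hP
  · rw [Multiset.count_add, Multiset.count_eq_zero.2 (not_mem h hP), add_zero]
  · rw [Multiset.count_add, Multiset.count_eq_zero.2 (not_mem h.symm hP), zero_add]

lemma ugcd_mul_left_cancel_of_isCoprime {C D : K[X]} (h : IsCoprime C D) (B : K[X]) :
    ugcd K (C * B) D = ugcd K B D := by
  refine Finset.prod_congr rfl fun P hP => ?_
  have hcop : IsCoprime (P ^ (normalizedFactors D).count P) C :=
    (h.symm.of_isCoprime_of_dvd_left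
      (dvd_of_mem_normalizedFactors (Multiset.mem_toFinset.1 hP))).pow_left
  have hiff : P ^ (normalizedFactors D).count P ∣ C * B ↔ P ^ (normalizedFactors D).count P ∣ B :=
    ⟨hcop.dvd_of_dvd_mul_left, (Dvd.dvd.mul_left · C)⟩
  classical
  exact if_congr hiff rfl rfl

lemma ugcd_mul_self {H : K[X]} (hH : H.Monic) (B : K[X]) : ugcd K (H * B) H = H := by
  have hdvd : ∀ P ∈ (normalizedFactors H).toFinset, P ^ (normalizedFactors H).count P ∣ H :=
    fun P hP => by
      conv_rhs => rw [← hH.prod_pow_count_normalizedFactors]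
      exact Finset.dvd_prod_of_mem _ hP
  rw [ugcd]
  conv_rhs => rw [← hH.prod_pow_count_normalizedFactors]
  exact Finset.prod_congr rfl fun P hP => if_pos ((hdvd P hP).mul_right B)

lemma ugcd_mul_mul {U D : K[X]} (hU : U.Monic) (hD : D.Monic) (h : IsCoprime U D) (B : K[X]) :
    ugcd K (U * B) (U * D) = U * ugcd K B D := by
  rw [ugcd_mul_of_isCoprime hU.ne_zero hD.ne_zero h, ugcd_mul_self hU,
    ugcd_mul_left_cancel_of_isCoprime h]

end UnitaryGcd

section UnitaryDivisors

variable {K : Type} [Field K] {H : K[X]}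

lemma tmap_mul_right {D C : K[X]} (hD : D.Monic) (hC : C.Monic) (A : K[X]) :
    tmap K (D * C) (A * C) = tmap K D A := by
  rw [tmap, tmap, ← modByMonic_eq_mod _ (hD.mul hC), ← modByMonic_eq_mod _ hD,
    mul_modByMonic_mul hD hC, hD.natDegree_mul hC]
  rcases eq_or_ne D 1 with rfl | hD1
  · simp
  · have := natDegree_modByMonic_lt A hD hD1
    rw [show D.natDegree + C.natDegree - 1 = (D.natDegree - 1) + C.natDegree by omega,
      coeff_mul_add_eq_of_natDegree_le (by omega) le_rfl, hC.coeff_natDegree, mul_one]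

lemma echar_mul_right [Algebra (ZMod p) K] (G : K[X]) {D C : K[X]} (hD : D.Monic) (hC : C.Monic)
    (B : K[X]) : echar p K G (D * C) (B * C) = echar p K G D B := by
  rw [echar, echar, ← mul_assoc, tmap_mul_right hD hC]

abbrev UnitaryDivisor (H : K[X]) := {D : K[X] // D.Monic ∧ D ∣ H ∧ IsCoprime D (H / D)}

lemma UnitaryDivisor.mul_div_cancel (D : UnitaryDivisor H) : D.1 * (H / D.1) = H :=
  EuclideanDomain.mul_div_cancel' D.2.1.ne_zero D.2.2.1

lemma UnitaryDivisor.monic_div (hH : H.Monic) (D : UnitaryDivisor H) : (H / D.1).Monic :=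
  D.2.1.of_mul_monic_left (by rw [D.mul_div_cancel]; exact hH)

lemma UnitaryDivisor.degree_mul_div_lt (hH : H.Monic) (D : UnitaryDivisor H) {B : K[X]}
    (hB : B.degree < D.1.degree) : (B * (H / D.1)).degree < H.degree := by
  conv_rhs => rw [← D.mul_div_cancel]
  exact (degree_mul_lt_degree_mul_iff (D.monic_div hH).ne_zero).2 hB

variable [DecidableEq K]

abbrev UnitaryResidue (D : K[X]) := {B : K[X] // B.degree < D.degree ∧ ugcd K B D = 1}

noncomputable def liftUnitaryResidue (hH : H.Monic)
    (x : Σ D : UnitaryDivisor H, UnitaryResidue D.1) : {A : K[X] // A.degree < H.degree} :=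
  ⟨x.2.1 * (H / x.1.1), x.1.degree_mul_div_lt hH x.2.2.1⟩

lemma ugcd_liftUnitaryResidue (hH : H.Monic) (x : Σ D : UnitaryDivisor H, UnitaryResidue D.1) :
    ugcd K (liftUnitaryResidue hH x).1 H = H / x.1.1 := by
  obtain ⟨D, B⟩ := x
  calc ugcd K (B.1 * (H / D.1)) H = ugcd K ((H / D.1) * B.1) ((H / D.1) * D.1) := by
        rw [mul_comm B.1, mul_comm _ D.1, D.mul_div_cancel]
    _ = H / D.1 := by rw [ugcd_mul_mul (D.monic_div hH) D.2.1 D.2.2.2.symm, B.2.2, mul_one]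

lemma liftUnitaryResidue_injective (hH : H.Monic) : Function.Injective (liftUnitaryResidue hH) := by
  rintro ⟨D₁, B₁⟩ ⟨D₂, B₂⟩ h
  have hC : H / D₁.1 = H / D₂.1 := by
    rw [← ugcd_liftUnitaryResidue hH ⟨D₁, B₁⟩, h, ugcd_liftUnitaryResidue]
  have hC0 : H / D₁.1 ≠ 0 := (D₁.monic_div hH).ne_zero
  obtain rfl : D₁ = D₂ := Subtype.ext <| mul_right_cancel₀ hC0 <| by
    rw [D₁.mul_div_cancel, hC, D₂.mul_div_cancel]
  obtain rfl : B₁ = B₂ := Subtype.ext <| mul_right_cancel₀ hC0 (congrArg Subtype.val h)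
  rfl

lemma liftUnitaryResidue_surjective (hH : H.Monic) :
    Function.Surjective (liftUnitaryResidue hH) := by
  rintro ⟨A, hA⟩
  obtain ⟨D, hUD, hcop⟩ := exists_ugcd_mul_eq_and_isCoprime hH A
  obtain ⟨B, hB⟩ := ugcd_dvd_left A H
  have hU := ugcd_monic A H
  have key := ugcd_mul_mul hU (hU.of_mul_monic_left (by rw [hUD]; exact hH)) hcop B
  generalize hUdef : ugcd K A H = U at *
  subst hUD hB
  have hD : D.Monic := hU.of_mul_monic_left hH
  have hHD : U * D / D = U := mul_div_cancel_right₀ _ hD.ne_zero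
  have hBD : ugcd K B D = 1 := (mul_eq_left₀ hU.ne_zero).1 (key.symm.trans hUdef)
  have hBdeg : B.degree < D.degree := by
    rw [mul_comm U, mul_comm U] at hA
    exact (degree_mul_lt_degree_mul_iff hU.ne_zero).1 hA
  let D' : UnitaryDivisor (U * D) := ⟨D, hD, dvd_mul_left D U, by rw [hHD]; exact hcop.symm⟩
  refine ⟨⟨D', ⟨B, hBdeg, hBD⟩⟩, Subtype.ext ?_⟩
  change B * (U * D / D) = U * B
  rw [hHD, mul_comm]

lemma echar_liftUnitaryResidue [Algebra (ZMod p) K] (hH : H.Monic) (G : K[X])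
    (x : Σ D : UnitaryDivisor H, UnitaryResidue D.1) :
    echar p K G H (liftUnitaryResidue hH x).1 = echar p K G x.1.1 x.2.1 := by
  have := echar_mul_right p G x.1.2.1 (x.1.monic_div hH) x.2.1
  rwa [x.1.mul_div_cancel] at this

end UnitaryDivisors

open scoped Classical in
theorem sum_etaStar_unitary_divisors (G H : Polynomial F) (hH : H.Monic) :
    (∑' D : {D : Polynomial F // D.Monic ∧ D ∣ H ∧ IsCoprime D (H / D)},
        etaStar p F G D.1) =
      if H ∣ G then (anorm F H : ℂ) else 0 := by
  let e := Equiv.ofBijective _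
    ⟨liftUnitaryResidue_injective hH, liftUnitaryResidue_surjective hH⟩
  have : Finite (Σ D : UnitaryDivisor H, UnitaryResidue D.1) := Finite.of_equiv _ e.symm
  calc ∑' D : UnitaryDivisor H, etaStar p F G D.1
      = ∑' D : UnitaryDivisor H, ∑' B : UnitaryResidue D.1, echar p F G D.1 B.1 := rfl
    _ = ∑' x : Σ D : UnitaryDivisor H, UnitaryResidue D.1, echar p F G x.1.1 x.2.1 := by
        refine (Summable.tsum_sigma' (f := fun x : Σ D : UnitaryDivisor H, UnitaryResidue D.1 =>
          echar p F G x.1.1 x.2.1) (fun D => ?_) .of_finite).symm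
        have : Finite (UnitaryResidue D.1) :=
          Finite.of_injective (Sigma.mk (β := fun D : UnitaryDivisor H => UnitaryResidue D.1) D)
            sigma_mk_injective
        exact .of_finite
    _ = ∑' x, echar p F G H (e x).1 :=
        tsum_congr fun x => (echar_liftUnitaryResidue p hH G x).symm
    _ = ∑' A : {A : F[X] // A.degree < H.degree}, echar p F G H A.1 :=
        e.tsum_eq fun A => echar p F G H A.1
    _ = _ := tsum_echar p hH
end

section
/- Let P ∈ A be monic irreducible and e ≥ 1. Then for any G ∈ A: η*(G, P^e) = |P|^e − 1 if P^e ∣ G, and η*(G, P^e) = −1 otherwise. -/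
open Polynomial UniqueFactorizationMonoid

variable (p : ℕ) [Fact p.Prime] (F : Type) [Field F] [Fintype F] [DecidableEq F]
  [Algebra (ZMod p) F]

/-!
For irreducible `P`, `(D, P^e)_* = 1` just says `D ≢ 0 (mod P^e)`, so `η*(G, P^e)` is the sum of
the additive character `D ↦ E(G, P^e)(D)` over all residues modulo `P^e`, minus the term `D = 0`.
That full sum is `|P|^e` if `P^e ∣ G` and `0` otherwise: if `R = G mod P^e ≠ 0`, multiplying by a
suitable `c T^k` moves the leading coefficient of `R` to `T^(deg P^e - 1)` without any reduction,
so `t_{P^e}(G ·)` takes every value of `𝔽_q`, and since the trace is onto the character is nontrivial.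
-/

section

variable {K : Type} [Field K] [DecidableEq K]

open scoped Classical in
lemma ugcd_prime_pow {P : K[X]} (hP : P.Monic) (hirr : Irreducible P) {e : ℕ} (he : 1 ≤ e)
    (D : K[X]) : ugcd K D (P ^ e) = if P ^ e ∣ D then P ^ e else 1 := by
  rw [ugcd, hirr.normalizedFactors_pow, hP.normalize_eq_self, Multiset.toFinset_replicate,
    if_neg (by omega : e ≠ 0), Finset.prod_singleton, Multiset.count_replicate_self]

lemma ugcd_prime_pow_eq_one_iff {P : K[X]} (hP : P.Monic) (hirr : Irreducible P) {e : ℕ}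
    (he : 1 ≤ e) {D : K[X]} (hD : D.degree < (P ^ e).degree) : ugcd K D (P ^ e) = 1 ↔ D ≠ 0 := by
  rw [ugcd_prime_pow hP hirr he]
  by_cases hD0 : D = 0
  · simpa [hD0] using fun h => hirr.not_isUnit (IsUnit.of_pow_eq_one h (by omega))
  · rw [if_neg fun h => hD0 (eq_zero_of_dvd_of_degree_lt h hD)]
    simpa using hD0

end

section

variable {K : Type} [Field K]

lemma tmap_mul_eq_zero_of_dvd {G H : K[X]} (h : H ∣ G) (D : K[X]) : tmap K H (G * D) = 0 := by
  rw [tmap, EuclideanDomain.mod_eq_zero.2 (h.mul_right D), coeff_zero]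

lemma exists_degree_lt_tmap_mul_eq {G H : K[X]} (hH : H ≠ 0) (hG : ¬H ∣ G) (y : K) :
    ∃ D : K[X], D.degree < H.degree ∧ tmap K H (G * D) = y := by
  set R := G % H
  have hR : R ≠ 0 := mt EuclideanDomain.mod_eq_zero.1 hG
  have hRH : R.natDegree < H.natDegree := natDegree_lt_natDegree hR (degree_mod_lt G hH)
  set k := H.natDegree - 1 - R.natDegree
  have hk : R.natDegree + k = H.natDegree - 1 := by omega
  set D := C (R.leadingCoeff⁻¹ * y) * X ^ k
  have hD : D.degree < H.degree :=
    (degree_C_mul_X_pow_le k _).trans_lt <| by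
      rw [degree_eq_natDegree hH]; exact_mod_cast (by omega : k < H.natDegree)
  have hRD : (R * D).degree < H.degree :=
    calc (R * D).degree ≤ (R.natDegree + k : ℕ) := by
          push_cast
          exact (degree_mul_le _ _).trans (add_le_add degree_le_natDegree (degree_C_mul_X_pow_le k _))
      _ < H.degree := by
          rw [degree_eq_natDegree hH]; exact_mod_cast (by omega : R.natDegree + k < H.natDegree)
  refine ⟨D, hD, ?_⟩
  rw [tmap, mul_mod, (mod_eq_self_iff hH).2 hD, (mod_eq_self_iff hH).2 hRD,
    show R * D = C (R.leadingCoeff⁻¹ * y) * R * X ^ k by ring, ← hk, coeff_mul_X_pow, coeff_C_mul,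
    coeff_natDegree, mul_right_comm, inv_mul_cancel₀ (leadingCoeff_ne_zero.2 hR), one_mul]

noncomputable def tmapAddHom (H : K[X]) : K[X] →+ K where
  toFun := tmap K H
  map_zero' := by rw [tmap, EuclideanDomain.zero_mod, coeff_zero]
  map_add' A B := by rw [tmap, tmap, tmap, add_mod, coeff_add]

variable [Algebra (ZMod p) K]

noncomputable def echarAddChar (G H : K[X]) : AddChar K[X] ℂ :=
  ZMod.stdAddChar.compAddMonoidHom
    ((Algebra.trace (ZMod p) K).toAddMonoidHom.comp ((tmapAddHom H).comp (AddMonoidHom.mulLeft G)))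

lemma echarAddChar_apply (G H D : K[X]) : echarAddChar p G H D = echar p K G H D := by
  rw [echar, ← ZMod.toCircle_apply, ← ZMod.stdAddChar_apply]
  rfl

lemma echar_zero (G H : K[X]) : echar p K G H 0 = 1 := by
  rw [← echarAddChar_apply, AddChar.map_zero_eq_one]

variable [Fintype K]

noncomputable instance (n : ℕ) : Fintype (degreeLT K n) :=
  Fintype.ofEquiv _ (degreeLTEquiv K n).toEquiv.symm

lemma card_degreeLT (n : ℕ) : Fintype.card (degreeLT K n) = Fintype.card K ^ n := by
  rw [Fintype.card_congr (degreeLTEquiv K n).toEquiv, Fintype.card_fun, Fintype.card_fin]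

open scoped Classical in
lemma sum_degreeLT_echar {G H : K[X]} (hH : H ≠ 0) :
    ∑ D : degreeLT K H.natDegree, echar p K G H D = if H ∣ G then (anorm K H : ℂ) else 0 := by
  set ψ := (echarAddChar p G H).compAddMonoidHom (degreeLT K H.natDegree).subtype.toAddMonoidHom
  have hψ : ψ = 0 ↔ H ∣ G := by
    refine ⟨fun h => by_contra fun hG => ?_, fun h => ?_⟩
    · obtain ⟨y, hy⟩ := Algebra.trace_surjective (ZMod p) K 1
      obtain ⟨D, hD, hDy⟩ := exists_degree_lt_tmap_mul_eq hH hG y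
      have hψD : ψ ⟨D, mem_degreeLT.2 (degree_eq_natDegree hH ▸ hD)⟩ = 1 := by
        rw [h, AddChar.zero_apply]
      have hstd : ZMod.stdAddChar (1 : ZMod p) = ZMod.stdAddChar (0 : ZMod p) := by
        rw [← hy, ← hDy, AddChar.map_zero_eq_one]
        exact hψD
      exact one_ne_zero (ZMod.injective_stdAddChar hstd)
    · ext D
      change ZMod.stdAddChar (Algebra.trace (ZMod p) K (tmap K H (G * D))) = 1
      rw [tmap_mul_eq_zero_of_dvd h, map_zero, AddChar.map_zero_eq_one]
  calc ∑ D : degreeLT K H.natDegree, echar p K G H D = ∑ D, ψ D :=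
        Fintype.sum_congr _ _ fun D => (echarAddChar_apply p G H D).symm
    _ = _ := by simp only [AddChar.sum_eq_ite, hψ, card_degreeLT, anorm, Nat.cast_pow]

lemma tsum_degree_lt_ne_zero_eq_sum_sub {H : K[X]} (hH : H ≠ 0) (f : K[X] → ℂ) :
    ∑' D : {D : K[X] // D.degree < H.degree ∧ D ≠ 0}, f D =
      ∑ D : degreeLT K H.natDegree, f D - f 0 := by
  classical
  let e : {D : degreeLT K H.natDegree // D ≠ 0} ≃ {D : K[X] // D.degree < H.degree ∧ D ≠ 0} :=
    (Equiv.subtypeEquivRight fun D => by rw [ne_eq, ← ZeroMemClass.coe_eq_zero]).trans <|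
      (Equiv.subtypeSubtypeEquivSubtypeInter (· ∈ degreeLT K H.natDegree) (· ≠ 0)).trans <|
        Equiv.subtypeEquivRight fun D => by rw [mem_degreeLT, degree_eq_natDegree hH]
  rw [← e.tsum_eq, tsum_fintype,
    Fintype.sum_eq_add_sum_subtype_ne (fun D : degreeLT K H.natDegree => f D) 0,
    ZeroMemClass.coe_zero, add_sub_cancel_left]
  rfl

lemma anorm_pow (P : K[X]) (e : ℕ) : anorm K (P ^ e) = anorm K P ^ e := by
  rw [anorm, anorm, natDegree_pow, ← pow_mul, mul_comm]

end

open scoped Classical in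
/-- For monic irreducible `P` and `e ≥ 1`: `η*(G, P^e) = |P|^e − 1` if `P^e ∣ G`,
and `η*(G, P^e) = −1` otherwise. -/
theorem etaStar_prime_pow (P : Polynomial F) (hP : P.Monic) (hirr : Irreducible P)
    (e : ℕ) (he : 1 ≤ e) (G : Polynomial F) :
    etaStar p F G (P ^ e) =
      if P ^ e ∣ G then (anorm F P : ℂ) ^ e - 1 else -1 := by
  have hH : P ^ e ≠ 0 := pow_ne_zero e hirr.ne_zero
  calc etaStar p F G (P ^ e)
      = ∑' D : {D : F[X] // D.degree < (P ^ e).degree ∧ D ≠ 0}, echar p F G (P ^ e) D := by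
        rw [etaStar]
        exact (Equiv.subtypeEquivRight fun D : F[X] =>
          and_congr_right (ugcd_prime_pow_eq_one_iff hP hirr he)).tsum_eq
            fun D => echar p F G (P ^ e) D.1
    _ = ∑ D : degreeLT F (P ^ e).natDegree, echar p F G (P ^ e) D - 1 := by
        rw [tsum_degree_lt_ne_zero_eq_sum_sub hH, echar_zero]
    _ = _ := by
        rw [sum_degreeLT_echar p hH, anorm_pow]
        split_ifs <;> push_cast <;> ring
end

section
/- Let f : (A₊)^k → ℂ be multiplicative (k ≥ 1). Then Σ over all tuples (G₁,…,G_k) ∈ (A₊)^k of 2^{ω(G₁)+⋯+ω(G_k)} · |(μ_k ∗ f)(G₁,…,G_k)| / (|G₁|⋯|G_k|) is finite if and only if Σ over all tuples (G₁,…,G_k) ∈ (A₊)^k of |(μ_k ∗ f)(G₁,…,G_k)| / (|G₁|⋯|G_k|) is finite. -/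
open Polynomial UniqueFactorizationMonoid

variable (p : ℕ) [Fact p.Prime] (F : Type) [Field F] [Fintype F] [DecidableEq F]
  [Algebra (ZMod p) F]

/-- The Dirichlet convolution of `μ_k` with `f` on `k`-tuples of monic polynomials:
`(μ_k ∗ f)(G₁,…,G_k) = Σ_{D_i E_i = G_i, D_i,E_i monic} μ(D₁)⋯μ(D_k) · f(E₁,…,E_k)`. -/
noncomputable def muConv {k : ℕ} (f : (Fin k → Polynomial F) → ℂ)
    (G : Fin k → Polynomial F) : ℂ :=
  ∑' DE : {DE : (Fin k → Polynomial F) × (Fin k → Polynomial F) //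
      (∀ i, (DE.1 i).Monic) ∧ (∀ i, (DE.2 i).Monic) ∧ ∀ i, DE.1 i * DE.2 i = G i},
    (∏ i, (mu F (DE.1.1 i) : ℂ)) * f DE.1.2

/-!
Write `a(G) = ‖(μ_k ∗ f)(G)‖ / (|G₁| ⋯ |G_k|)`. Since `μ_k` and `f` are multiplicative on tuples
with coprime products, so are their convolution and `a`. Sorting the prime factors of `G₁ ⋯ G_k`
into `m` classes, in each of the `m ^ ω(G₁ ⋯ G_k)` possible ways, writes `G` as a coordinatewise
product of `m` tuples with pairwise coprime products, and different sortings give different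
factorizations. Hence `m ^ ω(G₁ ⋯ G_k) · a(G)` is at most the sum of `a(H₁) ⋯ a(H_m)` over all
factorizations `G = H₁ ⋯ H_m`, and summing over `G` bounds the weighted series by `(Σ a) ^ m`.
For `m = 2 ^ k`, the factor `m ^ ω(G₁ ⋯ G_k)` dominates the weight `2 ^ (ω(G₁) + ⋯ + ω(G_k))`.
-/

open Finset

theorem summable_fin_pi_prod_of_nonneg {α : Type*} {a : α → ℝ} (ha : Summable a) (ha0 : 0 ≤ a) :
    ∀ m : ℕ, Summable fun x : Fin m → α => ∏ j, a (x j)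
  | 0 => .of_finite
  | m + 1 => by
    refine (Fin.consEquiv fun _ => α).summable_iff.mp <|
      (ha.mul_of_nonneg (summable_fin_pi_prod_of_nonneg ha ha0 m) ha0
        fun x => prod_nonneg fun j _ => ha0 (x j)).congr fun x => ?_
    simp [Fin.consEquiv, Fin.prod_univ_succ]

theorem primeFactors_subset_primeFactors_of_dvd {M : Type*} [CommMonoidWithZero M]
    [NormalizationMonoid M] [UniqueFactorizationMonoid M] {a b : M} (hab : a ∣ b) (hb : b ≠ 0) :
    primeFactors a ⊆ primeFactors b :=
  radical_dvd_radical_iff_primeFactors_subset_primeFactors.mp (radical_dvd_radical hab hb)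

namespace Polynomial

variable {K : Type*} [Field K]

theorem Monic.eq_and_eq_of_mul_eq_mul {g h a a' b b' : K[X]} (hgh : IsCoprime g h)
    (ha : a.Monic) (ha' : a'.Monic) (hag : a ∣ g) (ha'g : a' ∣ g) (hbh : b ∣ h) (hb'h : b' ∣ h)
    (heq : a * b = a' * b') : a = a' ∧ b = b' := by
  have hab' : IsCoprime a b' := (hgh.of_isCoprime_of_dvd_left hag).of_isCoprime_of_dvd_right hb'h
  have ha'b : IsCoprime a' b := (hgh.of_isCoprime_of_dvd_left ha'g).of_isCoprime_of_dvd_right hbh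
  have h1 : a ∣ a' := hab'.dvd_of_dvd_mul_right ⟨b, heq.symm⟩
  have h2 : a' ∣ a := ha'b.dvd_of_dvd_mul_right ⟨b', heq⟩
  obtain rfl := eq_of_monic_of_associated ha ha' (associated_of_dvd_dvd h1 h2)
  exact ⟨rfl, mul_left_cancel₀ ha.ne_zero heq⟩

theorem Monic.exists_monic_dvd_dvd_of_dvd_mul {a b x : K[X]} (hx : x.Monic) (hab : x ∣ a * b) :
    ∃ d e : K[X], d.Monic ∧ e.Monic ∧ d ∣ a ∧ e ∣ b ∧ d * e = x := by
  classical
  obtain ⟨d, e, hd, he, rfl⟩ := exists_dvd_and_dvd_of_dvd_mul hab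
  refine ⟨normalize d, normalize e, monic_normalize (left_ne_zero_of_mul hx.ne_zero),
    monic_normalize (right_ne_zero_of_mul hx.ne_zero), normalize_dvd_iff.mpr hd,
    normalize_dvd_iff.mpr he, ?_⟩
  rw [← normalize_mul, hx.normalize_eq_self]

theorem monic_of_mem_primeFactors [DecidableEq K] {P g : K[X]} (h : P ∈ primeFactors g) :
    P.Monic := by
  rw [mem_primeFactors] at h
  exact (normalize_eq_self_iff_monic (prime_of_normalized_factor P h).ne_zero).mp
    (normalize_normalized_factor P h)

end Polynomial

section MuOmega

variable {K : Type} [Field K] [DecidableEq K]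

theorem omega_eq_card_primeFactors (g : K[X]) : omega K g = (primeFactors g).card := by
  simp only [omega, toFinset_normalizedFactors]

theorem omega_mul_of_isRelPrime {a b : K[X]} (h : IsRelPrime a b) :
    omega K (a * b) = omega K a + omega K b := by
  simp only [omega_eq_card_primeFactors, primeFactors_mul_eq_disjUnion h, card_disjUnion]

theorem mu_mul_of_isRelPrime {a b : K[X]} (h : IsRelPrime a b) :
    mu K (a * b) = mu K a * mu K b := by
  by_cases ha : Squarefree a <;> by_cases hb : Squarefree b <;>
    simp [mu, squarefree_mul_iff, h, ha, hb, omega_mul_of_isRelPrime h, pow_add]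

theorem omega_le_of_dvd {a b : K[X]} (hab : a ∣ b) (hb : b ≠ 0) : omega K a ≤ omega K b := by
  simp only [omega_eq_card_primeFactors]
  exact card_le_card (primeFactors_subset_primeFactors_of_dvd hab hb)

end MuOmega

section Tuples

variable {K : Type*} [Field K] {k : ℕ}

def IsTupleMultiplicative {R : Type*} [Mul R] (f : (Fin k → K[X]) → R) : Prop :=
  ∀ G H : Fin k → K[X], (∀ i, (G i).Monic) → (∀ i, (H i).Monic) →
    IsCoprime (∏ i, G i) (∏ i, H i) → f (fun i => G i * H i) = f G * f H

theorem isCoprime_apply_of_isCoprime_prod {G H : Fin k → K[X]}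
    (h : IsCoprime (∏ i, G i) (∏ i, H i)) (i : Fin k) : IsCoprime (G i) (H i) :=
  (h.of_isCoprime_of_dvd_left (dvd_prod_of_mem G (mem_univ i))).of_isCoprime_of_dvd_right
    (dvd_prod_of_mem H (mem_univ i))

abbrev MonicTuple (K : Type*) [Field K] (k : ℕ) : Type _ := {G : Fin k → K[X] // ∀ i, (G i).Monic}

noncomputable def MonicTuple.coordProd {m : ℕ} (H : Fin m → MonicTuple K k) : MonicTuple K k :=
  ⟨fun i => ∏ j, (H j).1 i, fun i => monic_prod_of_monic _ _ fun j _ => (H j).2 i⟩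

abbrev MonicFactorPairs (G : Fin k → K[X]) : Type _ :=
  {DE : (Fin k → K[X]) × (Fin k → K[X]) //
    (∀ i, (DE.1 i).Monic) ∧ (∀ i, (DE.2 i).Monic) ∧ ∀ i, DE.1 i * DE.2 i = G i}

instance (G : Fin k → K[X]) : Finite (MonicFactorPairs G) := by
  by_cases hG : ∀ i, G i ≠ 0
  · have (i : Fin k) := Polynomial.fintypeSubtypeMonicDvd (G i) (hG i)
    refine Finite.of_injective (fun DE : MonicFactorPairs G => fun i =>
      ((⟨DE.1.1 i, DE.2.1 i, ⟨_, (DE.2.2.2 i).symm⟩⟩ : {g // g.Monic ∧ g ∣ G i}),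
       (⟨DE.1.2 i, DE.2.2.1 i, Dvd.intro_left _ (DE.2.2.2 i)⟩ : {g // g.Monic ∧ g ∣ G i})))
      fun DE DE' h => ?_
    ext i <;> simp_all [funext_iff]
  · obtain ⟨i, hi⟩ : ∃ i, G i = 0 := by simpa using hG
    have : IsEmpty (MonicFactorPairs G) :=
      ⟨fun DE => ((DE.2.1 i).mul (DE.2.2.1 i)).ne_zero (by rw [DE.2.2.2 i, hi])⟩
    infer_instance

noncomputable def MonicFactorPairs.mul {G H : Fin k → K[X]} (x : MonicFactorPairs G)
    (y : MonicFactorPairs H) : MonicFactorPairs (fun i => G i * H i) :=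
  ⟨(fun i => x.1.1 i * y.1.1 i, fun i => x.1.2 i * y.1.2 i),
    fun i => (x.2.1 i).mul (y.2.1 i), fun i => (x.2.2.1 i).mul (y.2.2.1 i),
    fun i => by rw [mul_mul_mul_comm, x.2.2.2 i, y.2.2.2 i]⟩

theorem MonicFactorPairs.mul_bijective {G H : Fin k → K[X]} (hG : ∀ i, (G i).Monic)
    (hH : ∀ i, (H i).Monic) (hGH : IsCoprime (∏ i, G i) (∏ i, H i)) :
    Function.Bijective fun xy : MonicFactorPairs G × MonicFactorPairs H => xy.1.mul xy.2 := by
  have hcop := isCoprime_apply_of_isCoprime_prod hGH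
  constructor
  · rintro ⟨⟨⟨D, E⟩, hD, hE, hDE⟩, ⟨⟨D', E'⟩, hD', hE', hDE'⟩⟩
      ⟨⟨⟨C, B⟩, hC, hB, hCB⟩, ⟨⟨C', B'⟩, hC', hB', hCB'⟩⟩ h
    simp only [MonicFactorPairs.mul, Subtype.mk.injEq, Prod.mk.injEq, funext_iff] at h
    have hDC i := (hD i).eq_and_eq_of_mul_eq_mul (hcop i) (hC i) ⟨_, (hDE i).symm⟩
      ⟨_, (hCB i).symm⟩ ⟨_, (hDE' i).symm⟩ ⟨_, (hCB' i).symm⟩ (h.1 i)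
    have hEB i := (hE i).eq_and_eq_of_mul_eq_mul (hcop i) (hB i) (Dvd.intro_left _ (hDE i))
      (Dvd.intro_left _ (hCB i)) (Dvd.intro_left _ (hDE' i)) (Dvd.intro_left _ (hCB' i)) (h.2 i)
    simp only [Prod.mk.injEq, Subtype.mk.injEq]
    exact ⟨⟨funext fun i => (hDC i).1, funext fun i => (hEB i).1⟩,
      funext fun i => (hDC i).2, funext fun i => (hEB i).2⟩
  · rintro ⟨⟨A, B⟩, hA, hB, hAB⟩
    choose d e hd he hdG heH hde using fun i =>
      (hA i).exists_monic_dvd_dvd_of_dvd_mul ⟨B i, (hAB i).symm⟩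
    choose c hc using hdG
    choose c' hc' using heH
    have hcm i : (c i).Monic := (hd i).of_mul_monic_left (hc i ▸ hG i)
    have hc'm i : (c' i).Monic := (he i).of_mul_monic_left (hc' i ▸ hH i)
    refine ⟨(⟨(d, c), hd, hcm, fun i => (hc i).symm⟩, ⟨(e, c'), he, hc'm, fun i => (hc' i).symm⟩),
      Subtype.ext (Prod.ext (funext hde) (funext fun i => ?_))⟩
    refine mul_left_cancel₀ (hA i).ne_zero ?_
    simp only [MonicFactorPairs.mul] at hAB hde ⊢
    rw [hAB, hc, hc', ← hde]
    ring

theorem MonicFactorPairs.prod_fst_dvd {G : Fin k → K[X]} (x : MonicFactorPairs G) :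
    ∏ i, x.1.1 i ∣ ∏ i, G i :=
  prod_dvd_prod_of_dvd _ _ fun i _ => ⟨_, (x.2.2.2 i).symm⟩

theorem MonicFactorPairs.prod_snd_dvd {G : Fin k → K[X]} (x : MonicFactorPairs G) :
    ∏ i, x.1.2 i ∣ ∏ i, G i :=
  prod_dvd_prod_of_dvd _ _ fun i _ => Dvd.intro_left _ (x.2.2.2 i)

noncomputable def tupleConv (ν f : (Fin k → K[X]) → ℂ) (G : Fin k → K[X]) : ℂ :=
  ∑' DE : MonicFactorPairs G, ν DE.1.1 * f DE.1.2

theorem IsTupleMultiplicative.tupleConv {ν f : (Fin k → K[X]) → ℂ}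
    (hν : IsTupleMultiplicative ν) (hf : IsTupleMultiplicative f) :
    IsTupleMultiplicative (tupleConv ν f) := by
  intro G H hG hH hGH
  have hmul (x : MonicFactorPairs G) (y : MonicFactorPairs H) :
      ν (x.mul y).1.1 * f (x.mul y).1.2 = ν x.1.1 * f x.1.2 * (ν y.1.1 * f y.1.2) := by
    rw [MonicFactorPairs.mul, hν _ _ x.2.1 y.2.1
        ((hGH.of_isCoprime_of_dvd_left x.prod_fst_dvd).of_isCoprime_of_dvd_right y.prod_fst_dvd),
      hf _ _ x.2.2.1 y.2.2.1
        ((hGH.of_isCoprime_of_dvd_left x.prod_snd_dvd).of_isCoprime_of_dvd_right y.prod_snd_dvd)]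
    ring
  unfold _root_.tupleConv
  rw [← (Equiv.ofBijective _ (MonicFactorPairs.mul_bijective hG hH hGH)).tsum_eq,
    tsum_mul_tsum_of_summable_norm (.of_finite) (.of_finite)]
  exact tsum_congr fun xy => hmul xy.1 xy.2

theorem IsTupleMultiplicative.norm {R : Type*} [SeminormedRing R] [NormMulClass R]
    {f : (Fin k → K[X]) → R} (hf : IsTupleMultiplicative f) :
    IsTupleMultiplicative fun G => ‖f G‖ := by
  intro G H hG hH hGH
  simp only [hf G H hG hH hGH, norm_mul]

theorem IsTupleMultiplicative.div {R : Type*} [DivisionCommMonoid R]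
    {f g : (Fin k → K[X]) → R} (hf : IsTupleMultiplicative f) (hg : IsTupleMultiplicative g) :
    IsTupleMultiplicative fun G => f G / g G := by
  intro G H hG hH hGH
  simp only [hf G H hG hH hGH, hg G H hG hH hGH, mul_div_mul_comm]

theorem IsTupleMultiplicative.map_prod {R : Type*} [CommMonoid R] {f : (Fin k → K[X]) → R}
    (hf : IsTupleMultiplicative f) {ι : Type*} {s : Finset ι} (hs : s.Nonempty)
    (X : ι → Fin k → K[X]) (hX : ∀ j i, (X j i).Monic)
    (hcop : (s : Set ι).Pairwise fun j l => IsCoprime (∏ i, X j i) (∏ i, X l i)) :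
    f (fun i => ∏ j ∈ s, X j i) = ∏ j ∈ s, f (X j) := by
  induction hs using Finset.Nonempty.cons_induction with
  | singleton j => simp
  | cons j s hj hs ih =>
    have hcop_cons : IsCoprime (∏ i, X j i) (∏ i, ∏ l ∈ s, X l i) := by
      rw [prod_comm]
      exact IsCoprime.prod_right fun l hl => hcop (by simp) (by simp [hl])
        (by rintro rfl; exact hj hl)
    simp only [prod_cons]
    rw [hf _ _ (hX j) (fun i => monic_prod_of_monic _ _ fun l _ => hX l i) hcop_cons,
      ih (hcop.mono (by simp))]

end Tuples

section Weight

variable {K : Type} [Field K] [DecidableEq K] {k : ℕ}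

theorem isTupleMultiplicative_prod_mu :
    IsTupleMultiplicative fun D : Fin k → K[X] => ∏ i, (mu K (D i) : ℂ) := by
  intro G H _ _ hGH
  simp only [← prod_mul_distrib,
    mu_mul_of_isRelPrime (isCoprime_apply_of_isCoprime_prod hGH _).isRelPrime, Int.cast_mul]

theorem IsTupleMultiplicative.muConv {f : (Fin k → K[X]) → ℂ} (hf : IsTupleMultiplicative f) :
    IsTupleMultiplicative (muConv K f) :=
  isTupleMultiplicative_prod_mu.tupleConv hf

end Weight

section Anorm

variable {K : Type} [Field K] [Fintype K] {k : ℕ}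

theorem anorm_mul {g h : K[X]} (hg : g ≠ 0) (hh : h ≠ 0) :
    anorm K (g * h) = anorm K g * anorm K h := by
  rw [anorm, natDegree_mul hg hh, pow_add, anorm, anorm]

theorem isTupleMultiplicative_prod_anorm :
    IsTupleMultiplicative fun G : Fin k → K[X] => ∏ i, (anorm K (G i) : ℝ) := by
  intro G H hG hH _
  simp only [← prod_mul_distrib, anorm_mul (hG _).ne_zero (hH _).ne_zero, Nat.cast_mul]

end Anorm

section PrimeClasses

variable {K : Type} [Field K] [DecidableEq K] {k m : ℕ}

noncomputable def classPart (G : Fin k → K[X]) (σ : primeFactors (∏ i, G i) → Fin m)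
    (j : Fin m) : Fin k → K[X] :=
  fun i => ∏ P with σ P = j, P.1 ^ (normalizedFactors (G i)).count P.1

variable {G : Fin k → K[X]}

theorem monic_classPart (σ : primeFactors (∏ i, G i) → Fin m) (j : Fin m) (i : Fin k) :
    (classPart G σ j i).Monic :=
  monic_prod_of_monic _ _ fun P _ => (monic_of_mem_primeFactors P.2).pow _

theorem prod_classPart (hG : ∀ i, (G i).Monic) (σ : primeFactors (∏ i, G i) → Fin m)
    (i : Fin k) : ∏ j, classPart G σ j i = G i := by
  have hsub : primeFactors (G i) ⊆ primeFactors (∏ i, G i) :=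
    primeFactors_subset_primeFactors_of_dvd (dvd_prod_of_mem G (mem_univ i))
      (monic_prod_of_monic _ _ fun i _ => hG i).ne_zero
  simp only [classPart]
  rw [prod_fiberwise univ σ fun P => P.1 ^ (normalizedFactors (G i)).count P.1,
    prod_coe_sort (primeFactors _) fun P => P ^ (normalizedFactors (G i)).count P,
    ← prod_subset hsub fun P _ hP => by
      rw [Multiset.count_eq_zero.mpr (mt mem_primeFactors.mpr hP), pow_zero],
    ← toFinset_normalizedFactors, ← Finset.prod_multiset_count,
    prod_normalizedFactors_eq (hG i).ne_zero, (hG i).normalize_eq_self]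

theorem dvd_prod_classPart_self (hG : ∀ i, (G i).Monic) (σ : primeFactors (∏ i, G i) → Fin m)
    (P : primeFactors (∏ i, G i)) : (P : K[X]) ∣ ∏ i, classPart G σ (σ P) i := by
  have hPn := mem_primeFactors.mp P.2
  have hP := prime_of_normalized_factor _ hPn
  obtain ⟨i, -, hi⟩ := hP.exists_mem_finset_dvd (dvd_of_mem_normalizedFactors hPn)
  have hPi : (P : K[X]) ∈ normalizedFactors (G i) :=
    (Polynomial.mem_normalizedFactors_iff (hG i).ne_zero).mpr
      ⟨hP.irreducible, monic_of_mem_primeFactors P.2, hi⟩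
  calc (P : K[X]) ∣ P ^ (normalizedFactors (G i)).count P.1 :=
        dvd_pow_self _ (Multiset.count_ne_zero.mpr hPi)
    _ ∣ classPart G σ (σ P) i := dvd_prod_of_mem _ (by simp)
    _ ∣ ∏ i, classPart G σ (σ P) i := dvd_prod_of_mem _ (mem_univ i)

theorem exists_normalize_eq_of_prime_dvd_prod_classPart {σ : primeFactors (∏ i, G i) → Fin m}
    {j : Fin m} {Q : K[X]} (hQ : Prime Q) (h : Q ∣ ∏ i, classPart G σ j i) :
    ∃ P, σ P = j ∧ normalize Q = P := by
  obtain ⟨i, -, hi⟩ := hQ.exists_mem_finset_dvd h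
  obtain ⟨P, hP, hQP⟩ := hQ.exists_mem_finset_dvd hi
  have hPn := mem_primeFactors.mp P.2
  refine ⟨P, (mem_filter.mp hP).2, ?_⟩
  rw [← normalize_normalized_factor _ hPn, normalize_eq_normalize_iff_associated]
  exact hQ.irreducible.associated_of_dvd (irreducible_of_normalized_factor _ hPn)
    (hQ.dvd_of_dvd_pow hQP)

theorem isCoprime_prod_classPart (σ : primeFactors (∏ i, G i) → Fin m) {j l : Fin m}
    (hjl : j ≠ l) : IsCoprime (∏ i, classPart G σ j i) (∏ i, classPart G σ l i) := by
  refine isCoprime_of_prime_dvd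
    (fun h => (monic_prod_of_monic _ _ fun i _ => monic_classPart σ j i).ne_zero h.1)
    fun Q hQ hj hl => hjl ?_
  obtain ⟨P, rfl, hP⟩ := exists_normalize_eq_of_prime_dvd_prod_classPart hQ hj
  obtain ⟨P', rfl, hP'⟩ := exists_normalize_eq_of_prime_dvd_prod_classPart hQ hl
  rw [Subtype.ext (hP.symm.trans hP')]

theorem classPart_injective (hG : ∀ i, (G i).Monic) :
    Function.Injective (classPart G (m := m)) := by
  intro σ τ h
  funext P
  have hPn := mem_primeFactors.mp P.2
  obtain ⟨P', hP', hPP'⟩ := exists_normalize_eq_of_prime_dvd_prod_classPart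
    (prime_of_normalized_factor _ hPn) (h ▸ dvd_prod_classPart_self hG σ P)
  rw [normalize_normalized_factor _ hPn] at hPP'
  rw [← Subtype.ext hPP'] at hP'
  exact hP'.symm

end PrimeClasses

section Summability

variable {K : Type} [Field K] [DecidableEq K] {k : ℕ}

theorem pow_omega_mul_le_tsum_fiber {a : (Fin k → K[X]) → ℝ} (ha : IsTupleMultiplicative a)
    (ha0 : 0 ≤ a) {m : ℕ} [NeZero m]
    (hsum : Summable fun H : Fin m → MonicTuple K k => ∏ j, a (H j).1) (G : MonicTuple K k) :
    (m : ℝ) ^ omega K (∏ i, G.1 i) * a G.1 ≤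
      ∑' H : MonicTuple.coordProd (m := m) ⁻¹' {G}, ∏ j, a (H.1 j).1 := by
  let split (σ : primeFactors (∏ i, G.1 i) → Fin m) : MonicTuple.coordProd (m := m) ⁻¹' {G} :=
    ⟨fun j => ⟨classPart G.1 σ j, monic_classPart σ j⟩,
      Subtype.ext (funext (prod_classPart G.2 σ))⟩
  have hsplit : Function.Injective split := fun σ τ h =>
    classPart_injective G.2 (funext fun j => congrArg (fun H => (H.1 j).1) h)
  calc (m : ℝ) ^ omega K (∏ i, G.1 i) * a G.1
      = ∑ σ : primeFactors (∏ i, G.1 i) → Fin m, a G.1 := by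
        simp [omega_eq_card_primeFactors]
    _ = ∑' σ, ∏ j, a ((split σ).1 j).1 := by
        rw [tsum_fintype]
        refine sum_congr rfl fun σ _ => ?_
        conv_lhs => rw [← funext (prod_classPart G.2 σ)]
        exact ha.map_prod univ_nonempty _ (fun j => monic_classPart σ j)
          fun j _ l _ => isCoprime_prod_classPart σ
    _ ≤ _ := Summable.tsum_le_tsum_of_inj split hsplit
        (fun H _ => prod_nonneg fun j _ => ha0 _) (fun σ => le_rfl) .of_finite (hsum.subtype _)

theorem summable_pow_omega_mul {a : (Fin k → K[X]) → ℝ} (ha : IsTupleMultiplicative a)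
    (ha0 : 0 ≤ a) (hsum : Summable fun G : MonicTuple K k => a G.1) (m : ℕ) [NeZero m] :
    Summable fun G : MonicTuple K k => (m : ℝ) ^ omega K (∏ i, G.1 i) * a G.1 := by
  have hprod := summable_fin_pi_prod_of_nonneg hsum (fun G => ha0 G.1) m
  exact (hprod.hasSum.tsum_fiberwise MonicTuple.coordProd).summable.of_nonneg_of_le
    (fun G => mul_nonneg (by positivity) (ha0 G.1)) (pow_omega_mul_le_tsum_fiber ha ha0 hprod)

theorem sum_omega_le_mul_omega_prod {G : Fin k → K[X]} (hG : ∀ i, G i ≠ 0) :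
    ∑ i, omega K (G i) ≤ k * omega K (∏ i, G i) := by
  calc ∑ i, omega K (G i) ≤ ∑ _i : Fin k, omega K (∏ i, G i) :=
        sum_le_sum fun i _ => omega_le_of_dvd (dvd_prod_of_mem G (mem_univ i))
          (prod_ne_zero_iff.mpr fun i _ => hG i)
    _ = k * omega K (∏ i, G i) := by simp

end Summability

theorem summable_weighted_iff_summable (k : ℕ)
    (f : (Fin k → Polynomial F) → ℂ)
    (hmul : ∀ G H : Fin k → Polynomial F, (∀ i, (G i).Monic) → (∀ i, (H i).Monic) →
      IsCoprime (∏ i, G i) (∏ i, H i) → f (fun i => G i * H i) = f G * f H) :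
    Summable (fun G : {G : Fin k → Polynomial F // ∀ i, (G i).Monic} =>
      (2 : ℝ) ^ (∑ i, omega F (G.1 i)) * ‖muConv F f G.1‖ / ∏ i, (anorm F (G.1 i) : ℝ)) ↔
    Summable (fun G : {G : Fin k → Polynomial F // ∀ i, (G i).Monic} =>
      ‖muConv F f G.1‖ / ∏ i, (anorm F (G.1 i) : ℝ)) := by
  set a := fun G : Fin k → F[X] => ‖muConv F f G‖ / ∏ i, (anorm F (G i) : ℝ)
  have ha : IsTupleMultiplicative a :=
    (IsTupleMultiplicative.muConv hmul).norm.div isTupleMultiplicative_prod_anorm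
  have ha0 : 0 ≤ a := fun G => by positivity
  simp only [mul_div_assoc]
  refine ⟨fun h => h.of_nonneg_of_le (fun G => ha0 G.1)
    fun G => le_mul_of_one_le_left (ha0 G.1) (one_le_pow₀ one_le_two), fun h => ?_⟩
  refine (summable_pow_omega_mul ha ha0 h (2 ^ k)).of_nonneg_of_le
    (fun G => mul_nonneg (by positivity) (ha0 G.1)) fun G => ?_
  gcongr
  rw [Nat.cast_pow, Nat.cast_two, ← pow_mul]
  exact pow_le_pow_right₀ one_le_two (sum_omega_le_mul_omega_prod fun i => (G.2 i).ne_zero)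
end
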